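/- In G ≅ ℤ² ⋊ ℤ/2ℤ (swap action) with generating set A = {a, a⁻¹, t, t⁻¹} where a = ((1,0),0) and t = ((0,0),1), any word over A representing an element with nontrivial ℤ/2ℤ-component contains an odd number of t-letters, and if it is geodesic it contains exactly one t-letter; hence the unique geodesic representing the element ((x,y),1) is aˣ t aʸ, of length |x| + |y| + 1. -/

import Mathlib

/-- The coordinate-swapping automorphism of ℤ². -/
def swapAut : MulAut (Multiplicative (ℤ × ℤ)) :=
  AddEquiv.toMultiplicative (AddEquiv.prodComm : (ℤ × ℤ) ≃+ (ℤ × ℤ))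

lemma swapAut_sq : swapAut ^ 2 = 1 := by
  refine MulEquiv.ext fun z => ?_
  show swapAut (swapAut z) = z
  cases z
  rfl

/-- The action of ℤ/2ℤ on ℤ² by swapping the two coordinates. -/
def swapAction : Multiplicative (ZMod 2) →* MulAut (Multiplicative (ℤ × ℤ)) where
  toFun ε := swapAut ^ (Multiplicative.toAdd ε).val
  map_one' := rfl
  map_mul' x y := by
    show swapAut ^ _ = swapAut ^ _ * swapAut ^ _
    rw [← pow_add]
    have key : ∀ m n : ℕ, m % 2 = n % 2 → swapAut ^ m = swapAut ^ n := by
      intro m n h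
      rw [← Nat.div_add_mod m 2, ← Nat.div_add_mod n 2, h, pow_add, pow_add,
        pow_mul, pow_mul, swapAut_sq]
      simp
    apply key
    have := ZMod.val_add (Multiplicative.toAdd x) (Multiplicative.toAdd y)
    simp only [toAdd_mul] at *
    omega

/-- The group G = ℤ² ⋊ ℤ/2ℤ with the swap action. -/
abbrev GG := SemidirectProduct (Multiplicative (ℤ × ℤ)) (Multiplicative (ZMod 2)) swapAction

/-- The generator a = ((1,0), 0). -/
def ga : GG := SemidirectProduct.inl (Multiplicative.ofAdd ((1, 0) : ℤ × ℤ))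

/-- The generator t = ((0,0), 1). -/
def gt : GG := SemidirectProduct.inr (Multiplicative.ofAdd (1 : ZMod 2))

/-- The element ((x,y), ε) of G. -/
def el (x y : ℤ) (ε : ZMod 2) : GG :=
  ⟨Multiplicative.ofAdd (x, y), Multiplicative.ofAdd ε⟩

/-- The generating set A = {a, a⁻¹, t, t⁻¹}. -/
def GenSet : Set GG := {ga, ga⁻¹, gt, gt⁻¹}

/-- `w` is a word over the alphabet A. -/
def IsWord (w : List GG) : Prop := ∀ x ∈ w, x ∈ GenSet

/-- `w` is a word over A representing the group element `g` (via its product). -/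
def Represents (w : List GG) (g : GG) : Prop := IsWord w ∧ w.prod = g

/-- The word length of `g`: minimal length of a word over A representing `g`. -/
noncomputable def wordLength (g : GG) : ℕ :=
  sInf {n | ∃ w : List GG, Represents w g ∧ w.length = n}

/-- A word over A is geodesic if no strictly shorter word over A represents
the same element. -/
def IsGeodesic (w : List GG) : Prop :=
  IsWord w ∧ ∀ v : List GG, IsWord v → v.prod = w.prod → w.length ≤ v.length

open Classical in
/-- The number of t-letters of a word (occurrences of t and t⁻¹). -/
noncomputable def tCount (w : List GG) : ℕ :=
  w.countP (fun x => decide (x = gt ∨ x = gt⁻¹))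

/-- The word aˣ over A: x letters `a` if x ≥ 0, |x| letters `a⁻¹` if x < 0. -/
def apow (x : ℤ) : List GG :=
  if 0 ≤ x then List.replicate x.toNat ga else List.replicate (-x).toNat ga⁻¹

/-- The word metric on G with respect to A. -/
noncomputable def dA (g h : GG) : ℕ := wordLength (g⁻¹ * h)

/-- The point of G reached at time i along the word w (the endpoint if i
exceeds the length of w). -/
def pt (w : List GG) (i : ℕ) : GG := (w.take i).prod

/-- Words u and w synchronously k-fellow travel. -/
def FellowTravels (k : ℕ) (u w : List GG) : Prop :=
  ∀ i : ℕ, dA (pt u i) (pt w i) ≤ k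

/-!
The projection onto ℤ/2ℤ is a homomorphism killing `a`, so the ℤ/2ℤ-component of the value of
a word is the parity of its number `k` of t-letters. The swap preserves the ℓ¹ norm on ℤ², so
the ℓ¹ norm of the ℤ²-component is subadditive along a word and bounded by its number of
a-letters. Hence a word for ((x,y),1) has odd `k` and length at least |x| + |y| + k ≥ |x| + |y| + 1,
with equality for aˣ t aʸ. Equality forces k = 1; the t-letter then splits the word into two
a-words with values aˣ and aʸ and lengths |x| and |y|, and such a-words are aˣ and aʸ.
-/

lemma gt_inv : gt⁻¹ = gt := by
  unfold gt; rw [← map_inv]; rfl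

lemma ga_eq_el : ga = el 1 0 0 := rfl

lemma ga_inv_eq_el : ga⁻¹ = el (-1) 0 0 := by
  unfold ga; rw [← map_inv]; rfl

lemma gt_eq_el : gt = el 0 0 1 := rfl

lemma el_injective {x y x' y' : ℤ} {ε ε' : ZMod 2} (h : el x y ε = el x' y' ε') :
    x = x' ∧ y = y' ∧ ε = ε' := by
  have hl := congrArg (fun g : GG => Multiplicative.toAdd g.left) h
  have hr := congrArg (fun g : GG => Multiplicative.toAdd g.right) h
  simp only [el, toAdd_ofAdd, Prod.mk.injEq] at hl hr
  exact ⟨hl.1, hl.2, hr⟩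

lemma swapAction_one : swapAction (Multiplicative.ofAdd 1) = swapAut := rfl

lemma el_zero_mul (p q x y : ℤ) (ε : ZMod 2) :
    el p q 0 * el x y ε = el (p + x) (q + y) ε := by
  ext <;> simp [el, ← ofAdd_add]

lemma el_one_mul (p q x y : ℤ) (ε : ZMod 2) :
    el p q 1 * el x y ε = el (p + y) (q + x) (1 + ε) := by
  ext <;> simp [el, swapAction_one, swapAut, ← ofAdd_add]

lemma ga_ne_gt : ga ≠ gt := by
  rw [ga_eq_el, gt_eq_el]; exact fun h => absurd (el_injective h).1 one_ne_zero

lemma ga_inv_ne_gt : ga⁻¹ ≠ gt := by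
  rw [ga_inv_eq_el, gt_eq_el]; exact fun h => absurd (el_injective h).1 (by norm_num)

lemma mem_genSet_iff {s : GG} : s ∈ GenSet ↔ s = ga ∨ s = ga⁻¹ ∨ s = gt := by
  simp [GenSet, gt_inv]

lemma isWord_cons {s : GG} {w : List GG} : IsWord (s :: w) ↔ s ∈ GenSet ∧ IsWord w :=
  List.forall_mem_cons

open Classical in
lemma tCount_cons (s : GG) (w : List GG) :
    tCount (s :: w) = tCount w + if s = gt then 1 else 0 := by
  by_cases h : s = gt <;> simp [tCount, gt_inv, h]

lemma tCount_append (u v : List GG) : tCount (u ++ v) = tCount u + tCount v :=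
  List.countP_append

def l1Norm (z : Multiplicative (ℤ × ℤ)) : ℕ :=
  (Multiplicative.toAdd z).1.natAbs + (Multiplicative.toAdd z).2.natAbs

lemma l1Norm_mul_le (z z' : Multiplicative (ℤ × ℤ)) : l1Norm (z * z') ≤ l1Norm z + l1Norm z' := by
  simp only [l1Norm, toAdd_mul, Prod.fst_add, Prod.snd_add]
  have := Int.natAbs_add_le (Multiplicative.toAdd z).1 (Multiplicative.toAdd z').1
  have := Int.natAbs_add_le (Multiplicative.toAdd z).2 (Multiplicative.toAdd z').2
  omega

lemma l1Norm_swapAction (ε : Multiplicative (ZMod 2)) (z : Multiplicative (ℤ × ℤ)) :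
    l1Norm (swapAction ε z) = l1Norm z := by
  obtain ⟨e, rfl⟩ : ∃ e : ZMod 2, Multiplicative.ofAdd e = ε := ⟨ε.toAdd, rfl⟩
  fin_cases e
  · rfl
  · exact add_comm _ _

lemma l1Norm_left_mul_le (g h : GG) : l1Norm (g * h).left ≤ l1Norm g.left + l1Norm h.left := by
  rw [SemidirectProduct.mul_left, ← l1Norm_swapAction g.right h.left]
  exact l1Norm_mul_le _ _

lemma l1Norm_left_prod_add_tCount_le {w : List GG} (hw : IsWord w) :
    l1Norm w.prod.left + tCount w ≤ w.length := by
  induction w with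
  | nil => rfl
  | cons s w ih =>
    rw [isWord_cons] at hw
    have hmul := l1Norm_left_mul_le s w.prod
    have hbound := ih hw.2
    rw [List.prod_cons, List.length_cons, tCount_cons]
    rcases mem_genSet_iff.1 hw.1 with rfl | rfl | rfl
    · have : l1Norm ga.left = 1 := rfl
      rw [if_neg ga_ne_gt]; omega
    · have : l1Norm ga⁻¹.left = 1 := by rw [ga_inv_eq_el]; rfl
      rw [if_neg ga_inv_ne_gt]; omega
    · have : l1Norm gt.left = 0 := rfl
      rw [if_pos rfl]; omega

lemma rightHom_ga : SemidirectProduct.rightHom ga = 1 := SemidirectProduct.rightHom_inl _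

lemma rightHom_gt : SemidirectProduct.rightHom gt = Multiplicative.ofAdd 1 :=
  SemidirectProduct.rightHom_inr _

lemma rightHom_prod {w : List GG} (hw : IsWord w) :
    SemidirectProduct.rightHom w.prod = Multiplicative.ofAdd (tCount w : ZMod 2) := by
  induction w with
  | nil => rfl
  | cons s w ih =>
    rw [isWord_cons] at hw
    rw [List.prod_cons, map_mul, ih hw.2, tCount_cons]
    rcases mem_genSet_iff.1 hw.1 with rfl | rfl | rfl
    · rw [rightHom_ga, if_neg ga_ne_gt, one_mul, add_zero]
    · rw [map_inv, rightHom_ga, if_neg ga_inv_ne_gt, inv_one, one_mul, add_zero]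
    · rw [rightHom_gt, if_pos rfl, ← ofAdd_add, Nat.cast_add, Nat.cast_one, add_comm]

lemma odd_tCount_of_represents {w : List GG} {x y : ℤ} (hw : Represents w (el x y 1)) :
    Odd (tCount w) := by
  have h := rightHom_prod hw.1
  rw [hw.2] at h
  exact ZMod.natCast_eq_one_iff_odd.1 (Multiplicative.ofAdd.injective h).symm

lemma natAbs_add_natAbs_add_tCount_le {w : List GG} {x y : ℤ} {ε : ZMod 2}
    (hw : Represents w (el x y ε)) : x.natAbs + y.natAbs + tCount w ≤ w.length := by
  have h := l1Norm_left_prod_add_tCount_le hw.1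
  rwa [hw.2] at h

lemma el_zero : el 0 0 0 = 1 := rfl

lemma el_zero_pow (p q : ℤ) (n : ℕ) : el p q 0 ^ n = el (n * p) (n * q) 0 := by
  induction n with
  | zero => simp [el_zero]
  | succ n ih => rw [pow_succ', ih, el_zero_mul]; push_cast; ring_nf

lemma apow_natCast (n : ℕ) : apow n = List.replicate n ga := by
  simp [apow]

lemma apow_neg_natCast (n : ℕ) : apow (-n) = List.replicate n ga⁻¹ := by
  rcases n.eq_zero_or_pos with rfl | -
  · rfl
  · simp [apow]

lemma apow_prod (x : ℤ) : (apow x).prod = el x 0 0 := by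
  obtain ⟨n, rfl | rfl⟩ := x.eq_nat_or_neg
  · rw [apow_natCast, List.prod_replicate, ga_eq_el, el_zero_pow]; simp
  · rw [apow_neg_natCast, List.prod_replicate, ga_inv_eq_el, el_zero_pow]; simp

lemma length_apow (x : ℤ) : (apow x).length = x.natAbs := by
  unfold apow; split <;> simp <;> omega

lemma eq_ga_or_eq_ga_inv_of_mem_apow {x : ℤ} {g : GG} (hg : g ∈ apow x) : g = ga ∨ g = ga⁻¹ := by
  unfold apow at hg
  split at hg <;> simp [List.eq_of_mem_replicate hg]

lemma isWord_apow (x : ℤ) : IsWord (apow x) := fun _ hg => by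
  rcases eq_ga_or_eq_ga_inv_of_mem_apow hg with rfl | rfl <;> simp [mem_genSet_iff]

lemma apow_of_pos {x : ℤ} (hx : 0 < x) : apow x = ga :: apow (x - 1) := by
  obtain ⟨n, rfl⟩ := Int.eq_ofNat_of_zero_le hx.le
  obtain ⟨m, rfl⟩ : ∃ m, n = m + 1 := Nat.exists_eq_add_one.2 (by omega)
  rw [show ((m + 1 : ℕ) : ℤ) - 1 = m by push_cast; ring, apow_natCast, apow_natCast,
    List.replicate_succ]

lemma apow_of_neg {x : ℤ} (hx : x < 0) : apow x = ga⁻¹ :: apow (x + 1) := by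
  obtain ⟨n, rfl⟩ : ∃ n : ℕ, x = -n := ⟨x.natAbs, by omega⟩
  obtain ⟨m, rfl⟩ : ∃ m, n = m + 1 := Nat.exists_eq_add_one.2 (by omega)
  rw [show -((m + 1 : ℕ) : ℤ) + 1 = -m by push_cast; ring, apow_neg_natCast, apow_neg_natCast,
    List.replicate_succ]

lemma eq_ga_or_eq_ga_inv_of_tCount_cons_eq_zero {s : GG} {u : List GG} (hs : s ∈ GenSet)
    (ht : tCount (s :: u) = 0) : (s = ga ∨ s = ga⁻¹) ∧ tCount u = 0 := by
  rw [tCount_cons] at ht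
  by_cases hst : s = gt
  · simp [hst] at ht
  · rw [if_neg hst] at ht
    exact ⟨(mem_genSet_iff.1 hs).imp_right (Or.resolve_right · hst), by omega⟩

lemma exists_prod_eq_el_of_tCount_eq_zero {u : List GG} (hu : IsWord u) (ht : tCount u = 0) :
    ∃ S : ℤ, u.prod = el S 0 0 := by
  induction u with
  | nil => exact ⟨0, rfl⟩
  | cons s u ih =>
    rw [isWord_cons] at hu
    obtain ⟨hs, ht⟩ := eq_ga_or_eq_ga_inv_of_tCount_cons_eq_zero hu.1 ht
    obtain ⟨S, hS⟩ := ih hu.2 ht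
    rcases hs with rfl | rfl
    · exact ⟨1 + S, by rw [List.prod_cons, hS, ga_eq_el, el_zero_mul]; simp⟩
    · exact ⟨-1 + S, by rw [List.prod_cons, hS, ga_inv_eq_el, el_zero_mul]; simp⟩

lemma eq_apow_of_prod_eq {u : List GG} (hu : IsWord u) (ht : tCount u = 0) {S : ℤ}
    (hprod : u.prod = el S 0 0) (hlen : u.length = S.natAbs) : u = apow S := by
  induction u generalizing S with
  | nil =>
    obtain rfl : S = 0 := by simpa [eq_comm] using hlen
    rfl
  | cons s u ih =>
    rw [isWord_cons] at hu
    obtain ⟨hs, ht⟩ := eq_ga_or_eq_ga_inv_of_tCount_cons_eq_zero hu.1 ht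
    rw [List.prod_cons, ← eq_inv_mul_iff_mul_eq] at hprod
    rw [List.length_cons] at hlen
    rcases hs with rfl | rfl
    · rw [ga_inv_eq_el, el_zero_mul] at hprod
      have hbound := natAbs_add_natAbs_add_tCount_le ⟨hu.2, hprod⟩
      rw [ih hu.2 ht hprod (by omega), apow_of_pos (by omega : 0 < S)]
      ring_nf
    · rw [inv_inv, ga_eq_el, el_zero_mul] at hprod
      have hbound := natAbs_add_natAbs_add_tCount_le ⟨hu.2, hprod⟩
      rw [ih hu.2 ht hprod (by omega), apow_of_neg (by omega : S < 0)]
      ring_nf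

lemma represents_apow_append_gt_append_apow (x y : ℤ) :
    Represents (apow x ++ [gt] ++ apow y) (el x y 1) := by
  refine ⟨fun g hg => ?_, ?_⟩
  · simp only [List.mem_append, List.mem_singleton] at hg
    rcases hg with (hg | rfl) | hg
    · exact isWord_apow x g hg
    · exact mem_genSet_iff.2 (Or.inr (Or.inr rfl))
    · exact isWord_apow y g hg
  · rw [List.prod_append, List.prod_append, apow_prod, apow_prod, List.prod_singleton, gt_eq_el,
      el_zero_mul, el_one_mul]
    simp

lemma length_apow_append_gt_append_apow (x y : ℤ) :
    (apow x ++ [gt] ++ apow y).length = x.natAbs + y.natAbs + 1 := by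
  simp [length_apow]
  omega

lemma natAbs_add_natAbs_add_one_le_length {w : List GG} {x y : ℤ}
    (hw : Represents w (el x y 1)) : x.natAbs + y.natAbs + 1 ≤ w.length :=
  (natAbs_add_natAbs_add_tCount_le hw).trans' (by
    have := (odd_tCount_of_represents hw).pos; omega)

lemma isGeodesic_apow_append_gt_append_apow (x y : ℤ) :
    IsGeodesic (apow x ++ [gt] ++ apow y) := by
  have hrep := represents_apow_append_gt_append_apow x y
  refine ⟨hrep.1, fun v hv hprod => ?_⟩
  rw [length_apow_append_gt_append_apow]
  exact natAbs_add_natAbs_add_one_le_length ⟨hv, hprod.trans hrep.2⟩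

lemma tCount_eq_one_of_length_le {w : List GG} {x y : ℤ} (hw : Represents w (el x y 1))
    (hlen : w.length ≤ x.natAbs + y.natAbs + 1) : tCount w = 1 := by
  have := (odd_tCount_of_represents hw).pos
  have := natAbs_add_natAbs_add_tCount_le hw
  omega

lemma eq_apow_append_gt_append_apow_of_length_le {w : List GG} {x y : ℤ}
    (hw : Represents w (el x y 1)) (hlen : w.length ≤ x.natAbs + y.natAbs + 1) :
    w = apow x ++ [gt] ++ apow y := by
  have ht := tCount_eq_one_of_length_le hw hlen
  obtain ⟨g, hg, hgt⟩ := List.countP_pos_iff.1 (ht ▸ Nat.one_pos : 0 < tCount w)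
  obtain rfl : g = gt := by simpa [gt_inv] using hgt
  obtain ⟨u, v, rfl⟩ := List.append_of_mem hg
  obtain ⟨hu, -, hv⟩ : IsWord u ∧ gt ∈ GenSet ∧ IsWord v := by
    simpa [IsWord, or_imp, forall_and] using hw.1
  rw [tCount_append, tCount_cons, if_pos rfl] at ht
  obtain ⟨S, hS⟩ := exists_prod_eq_el_of_tCount_eq_zero hu (by omega)
  obtain ⟨T, hT⟩ := exists_prod_eq_el_of_tCount_eq_zero hv (by omega)
  have hprod := hw.2
  rw [List.prod_append, List.prod_cons, hS, hT, gt_eq_el, el_one_mul, el_zero_mul, add_zero,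
    zero_add] at hprod
  obtain ⟨rfl, rfl, -⟩ := el_injective hprod
  simp only [List.length_append, List.length_cons] at hlen
  have hSu := natAbs_add_natAbs_add_tCount_le ⟨hu, hS⟩
  have hTv := natAbs_add_natAbs_add_tCount_le ⟨hv, hT⟩
  simp only [Int.natAbs_zero, add_zero] at hSu hTv
  rw [eq_apow_of_prod_eq hu (by omega) hS (by omega),
    eq_apow_of_prod_eq hv (by omega) hT (by omega)]
  simp

/-- Any word over A representing ((x,y),1) has an odd number of t-letters;
a geodesic such word has exactly one t-letter; and aˣ t aʸ is the unique
geodesic representing ((x,y),1), of length |x| + |y| + 1. -/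
theorem top_layer_unique_geodesic (x y : ℤ) :
    (∀ w : List GG, Represents w (el x y 1) → Odd (tCount w)) ∧
    (∀ w : List GG, Represents w (el x y 1) → IsGeodesic w → tCount w = 1) ∧
    Represents (apow x ++ [gt] ++ apow y) (el x y 1) ∧
    IsGeodesic (apow x ++ [gt] ++ apow y) ∧
    (apow x ++ [gt] ++ apow y).length = x.natAbs + y.natAbs + 1 ∧
    (∀ w : List GG, Represents w (el x y 1) → IsGeodesic w →
      w = apow x ++ [gt] ++ apow y) := by
  have hrep := represents_apow_append_gt_append_apow x y
  have hlen := length_apow_append_gt_append_apow x y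
  have length_le_of_isGeodesic {w : List GG} (hw : Represents w (el x y 1))
      (hgeo : IsGeodesic w) : w.length ≤ x.natAbs + y.natAbs + 1 :=
    hlen ▸ hgeo.2 _ hrep.1 (hrep.2.trans hw.2.symm)
  exact ⟨fun w hw => odd_tCount_of_represents hw,
    fun w hw hgeo => tCount_eq_one_of_length_le hw (length_le_of_isGeodesic hw hgeo),
    hrep, isGeodesic_apow_append_gt_append_apow x y, hlen,
    fun w hw hgeo =>
      eq_apow_append_gt_append_apow_of_length_le hw (length_le_of_isGeodesic hw hgeo)⟩
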